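/- If there exists a quaternary Hermitian LCD [n, 3, d] code, then for every positive integer s there exists a quaternary Hermitian LCD [21s + n, 3, 16s + d] code. -/
import Mathlib


open scoped Classical

noncomputable section

/-- The finite field with four elements. -/
abbrev F4 := GaloisField 2 2

/-- The (Hamming) weight of a vector over `F4`: the number of nonzero coordinates. -/
def wt {n : ℕ} (x : Fin n → F4) : ℕ :=
  (Finset.univ.filter (fun i => x i ≠ 0)).card

/-- Hermitian inner product on `F4^n`: `∑ i, x i * (conj (y i))` with `conj z = z^2`. -/
def hermInner {n : ℕ} (x y : Fin n → F4) : F4 :=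
  ∑ i, x i * (y i) ^ 2

/-- Membership in the Hermitian dual `C^{⊥H}` of a code `C`. -/
def inHermDual {n : ℕ} (C : Submodule F4 (Fin n → F4)) (x : Fin n → F4) : Prop :=
  ∀ y ∈ C, hermInner x y = 0

/-- `C` is Hermitian LCD: `C ∩ C^{⊥H} = {0}`. -/
def IsHermLCD {n : ℕ} (C : Submodule F4 (Fin n → F4)) : Prop :=
  ∀ x ∈ C, inHermDual C x → x = 0

/-- `C` has minimum weight (exactly) `d`. -/
def minWtIs {n : ℕ} (C : Submodule F4 (Fin n → F4)) (d : ℕ) : Prop :=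
  (∃ x ∈ C, x ≠ 0 ∧ wt x = d) ∧ ∀ x ∈ C, x ≠ 0 → d ≤ wt x

/-- `C` is a quaternary Hermitian LCD `[n,k,d]` code. -/
def IsHermLCDCode (n k d : ℕ) (C : Submodule F4 (Fin n → F4)) : Prop :=
  Module.finrank F4 C = k ∧ IsHermLCD C ∧ minWtIs C d

/-- `d₄(n,k) = d`: the largest minimum weight among quaternary Hermitian LCD `[n,k]` codes
is `d`. -/
def d4Is (n k d : ℕ) : Prop :=
  (∃ C : Submodule F4 (Fin n → F4), IsHermLCDCode n k d C) ∧
  (∀ C : Submodule F4 (Fin n → F4), Module.finrank F4 C = k → IsHermLCD C →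
    ∃ x ∈ C, x ≠ 0 ∧ wt x ≤ d)

end


noncomputable section StmtAux

instance : Fintype F4 := Fintype.ofFinite _

lemma F4card : Fintype.card F4 = 4 := by simpa using GaloisField.card 2 2 (by norm_num)

lemma F4two : (2 : F4) = 0 := by exact_mod_cast CharP.cast_eq_zero F4 2

lemma F4add_self (x : F4) : x + x = 0 := by
  have h : x + x = 2 * x := by ring
  rw [h, F4two, zero_mul]

lemma F4cube (a : F4) (h : a ≠ 0) : a ^ 3 = 1 := by
  have := FiniteField.pow_card_sub_one_eq_one a h
  rw [F4card] at this; simpa using this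

lemma F4sum : ∑ a : F4, a = 0 := by
  obtain ⟨c, hc⟩ : ∃ c : F4, c ∉ ({0, 1} : Finset F4) := by
    by_contra hfor
    push_neg at hfor
    have hsub : (Finset.univ : Finset F4) ⊆ {0, 1} := fun x _ => hfor x
    have h1 := Finset.card_le_card hsub
    have h2 : ({0, 1} : Finset F4).card ≤ 2 := Finset.card_insert_le _ _ |>.trans (by simp)
    rw [Finset.card_univ, F4card] at h1
    omega
  simp only [Finset.mem_insert, Finset.mem_singleton, not_or] at hc
  obtain ⟨hc0, hc1⟩ := hc
  have hbij : ∑ a : F4, c * a = ∑ a : F4, a :=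
    Fintype.sum_bijective (fun a => c * a) (mulLeft_bijective₀ c hc0) _ _ (fun a => rfl)
  have : (c - 1) * ∑ a : F4, a = 0 := by
    rw [sub_mul, one_mul, Finset.mul_sum, hbij, sub_self]
  rcases mul_eq_zero.1 this with h | h
  · exact absurd (sub_eq_zero.1 h) hc1
  · exact h

lemma F4sixteen : (16 : F4) = 0 := by
  have h : (16 : F4) = 2 * 8 := by norm_num
  rw [h, F4two, zero_mul]

lemma nsmul16 (x : F4) : (16 : ℕ) • x = 0 := by
  simp only [nsmul_eq_mul, Nat.cast_ofNat, F4sixteen, zero_mul]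

lemma nsmul3 (x : F4) : (3 : ℕ) • x = x := by
  rw [succ_nsmul, two_nsmul, F4add_self, zero_add]

lemma card_restF4 (i : Fin 3) : Fintype.card ({j : Fin 3 // j ≠ i} → F4) = 16 := by
  rw [Fintype.card_fun, F4card]
  have : Fintype.card {j : Fin 3 // j ≠ i} = 2 := by
    simp [Fintype.card_subtype_compl]
  rw [this]
  norm_num

abbrev V3 := Fin 3 → F4

def lead (v : V3) : F4 := if v 0 ≠ 0 then v 0 else if v 1 ≠ 0 then v 1 else v 2

lemma lead_ne_zero {v : V3} (hv : v ≠ 0) : lead v ≠ 0 := by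
  unfold lead
  by_cases h0 : v 0 = 0 <;> by_cases h1 : v 1 = 0 <;> simp [h0, h1]
  intro h2
  apply hv
  funext i
  fin_cases i <;> assumption

lemma lead_smul {c : F4} (hc : c ≠ 0) (v : V3) : lead (c • v) = c * lead v := by
  unfold lead
  simp only [Pi.smul_apply, smul_eq_mul, ne_eq, mul_eq_zero, hc, false_or]
  by_cases h0 : v 0 = 0 <;> by_cases h1 : v 1 = 0 <;> simp [h0, h1]

def rep (v : V3) : V3 := (lead v)⁻¹ • v

lemma rep_smul {c : F4} (hc : c ≠ 0) (v : V3) (_hv : v ≠ 0) : rep (c • v) = rep v := by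
  unfold rep
  rw [lead_smul hc, smul_smul]
  congr 1
  rw [mul_inv_rev, mul_assoc, inv_mul_cancel₀ hc, mul_one]

lemma smul_lead_rep {v : V3} (hv : v ≠ 0) : lead v • rep v = v := by
  unfold rep
  rw [smul_smul, mul_inv_cancel₀ (lead_ne_zero hv), one_smul]

lemma rep_ne_zero {v : V3} (hv : v ≠ 0) : rep v ≠ 0 :=
  fun h => hv (by rw [← smul_lead_rep hv, h, smul_zero])

lemma lead_rep {v : V3} (hv : v ≠ 0) : lead (rep v) = 1 := by
  unfold rep
  rw [lead_smul (inv_ne_zero (lead_ne_zero hv)), inv_mul_cancel₀ (lead_ne_zero hv)]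

lemma rep_of_lead_one {w : V3} (h : lead w = 1) : rep w = w := by
  unfold rep; rw [h]; simp

lemma rep_rep {v : V3} (hv : v ≠ 0) : rep (rep v) = rep v :=
  rep_of_lead_one (lead_rep hv)

/-- A set of representatives for the projective points of `PG(2,4)`. -/
def PS : Finset V3 := (Finset.univ.filter (fun v => v ≠ 0)).image rep

lemma PS_ne_zero {v : V3} (hv : v ∈ PS) : v ≠ 0 := by
  simp only [PS, Finset.mem_image, Finset.mem_filter] at hv
  obtain ⟨u, ⟨_, hu⟩, rfl⟩ := hv
  exact rep_ne_zero hu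

lemma PS_rep {v : V3} (hv : v ∈ PS) : rep v = v := by
  simp only [PS, Finset.mem_image, Finset.mem_filter] at hv
  obtain ⟨u, ⟨_, hu⟩, rfl⟩ := hv
  exact rep_rep hu

lemma orbit_sum {M : Type*} [AddCommMonoid M] (f : V3 → M)
    (hf : ∀ (c : F4), c ≠ 0 → ∀ v, f (c • v) = f v) :
    ∑ w ∈ Finset.univ.filter (fun w : V3 => w ≠ 0), f w = ∑ v ∈ PS, 3 • f v := by
  rw [← Finset.sum_fiberwise_of_maps_to (g := rep) (t := PS)
    (fun w hw => Finset.mem_image_of_mem rep hw)]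
  apply Finset.sum_congr rfl
  intro v hv
  have hvne := PS_ne_zero hv
  have key : ∑ w ∈ (Finset.univ.filter (fun w : V3 => w ≠ 0)).filter (fun w => rep w = v), f w
      = ∑ c ∈ Finset.univ.filter (fun c : F4 => c ≠ 0), f (c • v) := by
    apply Finset.sum_bij' (fun w _ => lead w) (fun c _ => c • v)
    · intro w hw
      simp only [Finset.mem_filter, Finset.mem_univ, true_and] at hw ⊢
      exact lead_ne_zero hw.1
    · intro c hc
      simp only [Finset.mem_filter, Finset.mem_univ, true_and] at hc ⊢
      exact ⟨smul_ne_zero hc hvne, by rw [rep_smul hc v hvne, PS_rep hv]⟩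
    · intro w hw
      simp only [Finset.mem_filter, Finset.mem_univ, true_and] at hw
      rw [← hw.2, smul_lead_rep hw.1]
    · intro c hc
      simp only [Finset.mem_filter, Finset.mem_univ, true_and] at hc
      have hl : lead v = 1 := by rw [← PS_rep hv]; exact lead_rep hvne
      rw [lead_smul hc, hl, mul_one]
    · intro w hw
      simp only [Finset.mem_filter, Finset.mem_univ, true_and] at hw
      rw [← hw.2, smul_lead_rep hw.1]
  rw [key]
  have hcst : ∀ c ∈ Finset.univ.filter (fun c : F4 => c ≠ 0), f (c • v) = f v := by
    intro c hc
    simp only [Finset.mem_filter, Finset.mem_univ, true_and] at hc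
    exact hf c hc v
  rw [Finset.sum_congr rfl hcst, Finset.sum_const]
  congr 1
  rw [Finset.filter_ne', Finset.card_erase_of_mem (Finset.mem_univ 0), Finset.card_univ, F4card]

lemma card_PS : PS.card = 21 := by
  have h := orbit_sum (fun _ => (1 : ℕ)) (fun _ _ _ => rfl)
  rw [Finset.sum_const, Finset.sum_const, Finset.filter_ne',
    Finset.card_erase_of_mem (Finset.mem_univ 0), Finset.card_univ] at h
  have hV : Fintype.card V3 = 64 := by
    rw [Fintype.card_fun, F4card]; norm_num
  rw [hV] at h
  simp only [smul_eq_mul, mul_one] at h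
  omega

/-- full Gram sum over all of V3 vanishes -/
lemma full_gram (i j : Fin 3) : ∑ w : V3, w i * (w j) ^ 2 = 0 := by
  classical
  set e := Equiv.funSplitAt i F4 with he
  by_cases hij : j = i
  · subst hij
    calc ∑ w : V3, w j * (w j) ^ 2
        = ∑ p : F4 × ({l : Fin 3 // l ≠ j} → F4), (e.symm p) j * ((e.symm p) j) ^ 2 :=
          (Equiv.sum_comp e.symm _).symm
      _ = ∑ p : F4 × ({l : Fin 3 // l ≠ j} → F4), p.1 * p.1 ^ 2 := by
          apply Finset.sum_congr rfl; intro p _; simp [he]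
      _ = ∑ a : F4, ∑ _r : ({l : Fin 3 // l ≠ j} → F4), a * a ^ 2 := by
          rw [Fintype.sum_prod_type]
      _ = 0 := by
          apply Finset.sum_eq_zero; intro a _
          rw [Finset.sum_const, Finset.card_univ, card_restF4, nsmul16]
  · calc ∑ w : V3, w i * (w j) ^ 2
        = ∑ p : F4 × ({l : Fin 3 // l ≠ i} → F4), (e.symm p) i * ((e.symm p) j) ^ 2 :=
          (Equiv.sum_comp e.symm _).symm
      _ = ∑ p : F4 × ({l : Fin 3 // l ≠ i} → F4), p.1 * (p.2 ⟨j, hij⟩) ^ 2 := by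
          apply Finset.sum_congr rfl; intro p _; simp [he, hij]
      _ = ∑ a : F4, ∑ r : ({l : Fin 3 // l ≠ i} → F4), a * (r ⟨j, hij⟩) ^ 2 := by
          rw [Fintype.sum_prod_type]
      _ = ∑ a : F4, a * ∑ r : ({l : Fin 3 // l ≠ i} → F4), (r ⟨j, hij⟩) ^ 2 := by
          apply Finset.sum_congr rfl; intro a _; rw [Finset.mul_sum]
      _ = (∑ a : F4, a) * ∑ r : ({l : Fin 3 // l ≠ i} → F4), (r ⟨j, hij⟩) ^ 2 := by
          rw [Finset.sum_mul]
      _ = 0 := by rw [F4sum, zero_mul]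

/-- The Gram sum over the representatives vanishes. -/
lemma PS_gram (i j : Fin 3) : ∑ v ∈ PS, v i * (v j) ^ 2 = 0 := by
  have hinv : ∀ c : F4, c ≠ 0 → ∀ v : V3, (c • v) i * ((c • v) j) ^ 2 = v i * (v j) ^ 2 := by
    intro c hc v
    have h : (c • v) i * ((c • v) j) ^ 2 = c ^ 3 * (v i * (v j) ^ 2) := by
      simp only [Pi.smul_apply, smul_eq_mul]; ring
    rw [h, F4cube c hc, one_mul]
  have h := orbit_sum (fun v : V3 => v i * (v j) ^ 2) hinv
  rw [Finset.sum_filter_of_ne (by intro x _ hfx hx0; apply hfx; rw [hx0]; simp),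
    full_gram] at h
  calc ∑ v ∈ PS, v i * (v j) ^ 2
      = ∑ v ∈ PS, (3 : ℕ) • (v i * (v j) ^ 2) := by
        apply Finset.sum_congr rfl; intro v _; rw [nsmul3]
    _ = 0 := h.symm

def dotp (m v : V3) : F4 := ∑ i, m i * v i

lemma dotp_zero (m : V3) : dotp m 0 = 0 := by
  unfold dotp; simp

lemma dotp_smul (m : V3) (c : F4) (v : V3) : dotp m (c • v) = c * dotp m v := by
  unfold dotp
  rw [Finset.mul_sum]
  apply Finset.sum_congr rfl
  intro i _
  simp only [Pi.smul_apply, smul_eq_mul]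
  ring

lemma count3 (u c : F4) (hu : u ≠ 0) :
    ∑ a : F4, (if u * a + c ≠ 0 then (1 : ℕ) else 0) = 3 := by
  set σ : F4 ≃ F4 := (Equiv.mulLeft₀ u hu).trans (Equiv.addRight c) with hσ
  have happ : ∀ a : F4, σ a = u * a + c := by intro a; simp [hσ]
  calc ∑ a : F4, (if u * a + c ≠ 0 then (1 : ℕ) else 0)
      = ∑ b : F4, (if b ≠ 0 then (1 : ℕ) else 0) := by
        refine Fintype.sum_equiv σ _ _ (fun a => ?_)
        simp only [happ]
    _ = (Finset.univ.filter (fun b : F4 => b ≠ 0)).card := (Finset.card_filter _ _).symm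
    _ = 3 := by
        rw [Finset.filter_ne', Finset.card_erase_of_mem (Finset.mem_univ 0),
          Finset.card_univ, F4card]

lemma dotp_split (i : Fin 3) (m w : V3) :
    dotp m w = m i * w i + ∑ l : {l : Fin 3 // l ≠ i}, m l * w l := by
  unfold dotp
  rw [← Finset.add_sum_erase _ _ (Finset.mem_univ i)]
  congr 1
  exact Finset.sum_subtype (Finset.univ.erase i) (fun l => by simp) (fun l => m l * w l)

lemma count48 {m : V3} (hm : m ≠ 0) :
    (Finset.univ.filter (fun w : V3 => dotp m w ≠ 0)).card = 48 := by
  obtain ⟨i, hi⟩ : ∃ i, m i ≠ 0 := by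
    by_contra hcon; push_neg at hcon; exact hm (funext hcon)
  classical
  set e := Equiv.funSplitAt i F4 with he
  rw [Finset.card_filter]
  calc ∑ w : V3, (if dotp m w ≠ 0 then (1 : ℕ) else 0)
      = ∑ p : F4 × ({l : Fin 3 // l ≠ i} → F4),
          (if dotp m (e.symm p) ≠ 0 then (1 : ℕ) else 0) := (Equiv.sum_comp e.symm _).symm
    _ = ∑ p : F4 × ({l : Fin 3 // l ≠ i} → F4),
          (if m i * p.1 + (∑ l : {l : Fin 3 // l ≠ i}, m l * p.2 l) ≠ 0 then (1 : ℕ) else 0) := by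
        apply Finset.sum_congr rfl; intro p _
        have h1 : (e.symm p) i = p.1 := by simp [he]
        have h2 : ∀ l : {l : Fin 3 // l ≠ i}, (e.symm p) l = p.2 l := by
          intro l; simp [he, l.2]
        have hd : dotp m (e.symm p) = m i * p.1
            + ∑ l : {l : Fin 3 // l ≠ i}, m l * p.2 l := by
          rw [dotp_split i, h1]
          congr 1
          exact Finset.sum_congr rfl (fun l _ => by rw [h2 l])
        rw [hd]
    _ = ∑ a : F4, ∑ r : ({l : Fin 3 // l ≠ i} → F4),
          (if m i * a + (∑ l : {l : Fin 3 // l ≠ i}, m l * r l) ≠ 0 then (1 : ℕ) else 0) := by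
        rw [Fintype.sum_prod_type]
    _ = ∑ r : ({l : Fin 3 // l ≠ i} → F4), ∑ a : F4,
          (if m i * a + (∑ l : {l : Fin 3 // l ≠ i}, m l * r l) ≠ 0 then (1 : ℕ) else 0) :=
        Finset.sum_comm
    _ = ∑ _r : ({l : Fin 3 // l ≠ i} → F4), (3 : ℕ) := by
        apply Finset.sum_congr rfl; intro r _
        exact count3 (m i) _ hi
    _ = 48 := by
        rw [Finset.sum_const, Finset.card_univ, card_restF4]
        norm_num

lemma count16 {m : V3} (hm : m ≠ 0) :
    (PS.filter (fun v => dotp m v ≠ 0)).card = 16 := by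
  have hinv : ∀ c : F4, c ≠ 0 → ∀ v : V3,
      (if dotp m (c • v) ≠ 0 then (1 : ℕ) else 0) = (if dotp m v ≠ 0 then (1 : ℕ) else 0) := by
    intro c hc v
    rw [dotp_smul]
    congr 1
    simp [mul_ne_zero_iff, hc]
  have h := orbit_sum (fun v : V3 => if dotp m v ≠ 0 then (1 : ℕ) else 0) hinv
  rw [Finset.sum_filter_of_ne (by intro x _ hfx hx0; apply hfx; rw [hx0, dotp_zero]; simp)] at h
  rw [← Finset.card_filter, count48 hm] at h
  have hr : ∑ v ∈ PS, (3 : ℕ) • (if dotp m v ≠ 0 then (1 : ℕ) else 0)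
      = 3 * (PS.filter (fun v => dotp m v ≠ 0)).card := by
    rw [Finset.card_filter, Finset.mul_sum]
    apply Finset.sum_congr rfl
    intro v _
    rw [smul_eq_mul]
  rw [hr] at h
  omega

end StmtAux


noncomputable section Construction

lemma dotp_add_left (m m' v : V3) : dotp (m + m') v = dotp m v + dotp m' v := by
  unfold dotp
  rw [← Finset.sum_add_distrib]
  apply Finset.sum_congr rfl
  intro i _
  simp [add_mul]

lemma dotp_smul_left (c : F4) (m v : V3) : dotp (c • m) v = c * dotp m v := by
  unfold dotp
  rw [Finset.mul_sum]
  apply Finset.sum_congr rfl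
  intro i _
  simp [mul_assoc]

variable {n s : ℕ} (b : Fin 3 → (Fin n → F4))
variable (E : ((Fin s × {v : V3 // v ∈ PS}) ⊕ Fin n) ≃ Fin (21 * s + n))

/-- the "C-part" of a codeword, in the ambient space. -/
def cCfun (m : V3) : Fin n → F4 := fun t => ∑ i, m i * b i t

/-- the full codeword of message `m` in the juxtaposed code. -/
def cwfun (m : V3) : Fin (21 * s + n) → F4 :=
  fun k => Sum.elim (fun tv : Fin s × {v : V3 // v ∈ PS} => dotp m tv.2.1)
    (fun t => cCfun b m t) (E.symm k)

lemma cC_add (m m' : V3) : cCfun b (m + m') = cCfun b m + cCfun b m' := by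
  funext t
  unfold cCfun
  simp only [Pi.add_apply]
  rw [← Finset.sum_add_distrib]
  apply Finset.sum_congr rfl
  intro i _
  simp [add_mul]

lemma cC_smul (c : F4) (m : V3) : cCfun b (c • m) = c • cCfun b m := by
  funext t
  unfold cCfun
  simp only [Pi.smul_apply, smul_eq_mul]
  rw [Finset.mul_sum]
  apply Finset.sum_congr rfl
  intro i _
  simp [mul_assoc]

/-- the encoding as a linear map. -/
def cwLin : V3 →ₗ[F4] (Fin (21 * s + n) → F4) where
  toFun := cwfun b E
  map_add' m m' := by
    funext k
    unfold cwfun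
    cases hz : E.symm k with
    | inl tv => simp [hz, dotp_add_left]
    | inr t => simp [hz, cC_add]
  map_smul' c m := by
    funext k
    unfold cwfun
    cases hz : E.symm k with
    | inl tv => simp [hz, dotp_smul_left]
    | inr t => simp [hz, cC_smul]

lemma cw_eval_inl (m : V3) (t : Fin s) (v : {v : V3 // v ∈ PS}) :
    cwfun b E m (E (Sum.inl (t, v))) = dotp m v.1 := by
  unfold cwfun
  rw [Equiv.symm_apply_apply]
  rfl

lemma cw_eval_inr (m : V3) (t : Fin n) :
    cwfun b E m (E (Sum.inr t)) = cCfun b m t := by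
  unfold cwfun
  rw [Equiv.symm_apply_apply]
  rfl

lemma wt_cw (m : V3) :
    wt (cwfun b E m) = s * (PS.filter (fun v => dotp m v ≠ 0)).card + wt (cCfun b m) := by
  calc wt (cwfun b E m)
      = ∑ k, (if cwfun b E m k ≠ 0 then (1 : ℕ) else 0) := Finset.card_filter _ _
    _
      = ∑ z, (if cwfun b E m (E z) ≠ 0 then (1 : ℕ) else 0) := (Equiv.sum_comp E _).symm
    _ = (∑ tv : Fin s × {v : V3 // v ∈ PS},
          (if cwfun b E m (E (Sum.inl tv)) ≠ 0 then (1 : ℕ) else 0))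
        + ∑ t : Fin n, (if cwfun b E m (E (Sum.inr t)) ≠ 0 then (1 : ℕ) else 0) :=
        Fintype.sum_sum_type _
    _ = s * (PS.filter (fun v => dotp m v ≠ 0)).card
        + ∑ t : Fin n, (if cCfun b m t ≠ 0 then (1 : ℕ) else 0) := by
        congr 1
        · calc ∑ tv : Fin s × {v : V3 // v ∈ PS},
                (if cwfun b E m (E (Sum.inl tv)) ≠ 0 then (1 : ℕ) else 0)
              = ∑ _t : Fin s, ∑ v : {v : V3 // v ∈ PS},
                  (if dotp m v.1 ≠ 0 then (1 : ℕ) else 0) := by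
                rw [Fintype.sum_prod_type]
                apply Finset.sum_congr rfl; intro t _
                apply Finset.sum_congr rfl; intro v _
                rw [cw_eval_inl]
            _ = ∑ _t : Fin s, (PS.filter (fun v => dotp m v ≠ 0)).card := by
                apply Finset.sum_congr rfl; intro t _
                rw [Finset.sum_coe_sort PS (fun v => if dotp m v ≠ 0 then (1 : ℕ) else 0),
                  ← Finset.card_filter]
            _ = s * (PS.filter (fun v => dotp m v ≠ 0)).card := by
                rw [Finset.sum_const, Finset.card_univ, Fintype.card_fin, smul_eq_mul]
        · apply Finset.sum_congr rfl; intro t _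
          rw [cw_eval_inr]
    _ = s * (PS.filter (fun v => dotp m v ≠ 0)).card + wt (cCfun b m) := by
        congr 1
        exact (Finset.card_filter _ _).symm

lemma PS_herm (m m' : V3) : ∑ v ∈ PS, dotp m v * (dotp m' v) ^ 2 = 0 := by
  have expand : ∀ v : V3, dotp m v * (dotp m' v) ^ 2
      = ∑ i : Fin 3, ∑ j : Fin 3, (m i * (m' j) ^ 2) * (v i * (v j) ^ 2) := by
    intro v
    unfold dotp
    rw [show (∑ j, m' j * v j) ^ 2 = ∑ j, (m' j * v j) ^ 2 from sum_pow_char 2 _ _,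
      Finset.sum_mul_sum]
    apply Finset.sum_congr rfl; intro i _
    apply Finset.sum_congr rfl; intro j _
    ring
  rw [Finset.sum_congr rfl (fun v _ => expand v), Finset.sum_comm]
  apply Finset.sum_eq_zero
  intro i _
  rw [Finset.sum_comm]
  apply Finset.sum_eq_zero
  intro j _
  rw [← Finset.mul_sum, PS_gram, mul_zero]

lemma herm_cw (m m' : V3) :
    hermInner (cwfun b E m) (cwfun b E m') = hermInner (cCfun b m) (cCfun b m') := by
  unfold hermInner
  calc ∑ k, cwfun b E m k * (cwfun b E m' k) ^ 2
      = ∑ z, cwfun b E m (E z) * (cwfun b E m' (E z)) ^ 2 := (Equiv.sum_comp E _).symm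
    _ = (∑ tv : Fin s × {v : V3 // v ∈ PS},
          cwfun b E m (E (Sum.inl tv)) * (cwfun b E m' (E (Sum.inl tv))) ^ 2)
        + ∑ t : Fin n, cwfun b E m (E (Sum.inr t)) * (cwfun b E m' (E (Sum.inr t))) ^ 2 :=
        Fintype.sum_sum_type _
    _ = 0 + ∑ t : Fin n, cCfun b m t * (cCfun b m' t) ^ 2 := by
        congr 1
        · calc ∑ tv : Fin s × {v : V3 // v ∈ PS},
                cwfun b E m (E (Sum.inl tv)) * (cwfun b E m' (E (Sum.inl tv))) ^ 2
              = ∑ _t : Fin s, ∑ v : {v : V3 // v ∈ PS}, dotp m v.1 * (dotp m' v.1) ^ 2 := by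
                rw [Fintype.sum_prod_type]
                apply Finset.sum_congr rfl; intro t _
                apply Finset.sum_congr rfl; intro v _
                rw [cw_eval_inl, cw_eval_inl]
            _ = ∑ _t : Fin s, (0 : F4) := by
                apply Finset.sum_congr rfl; intro t _
                rw [Finset.sum_coe_sort PS (fun v => dotp m v * (dotp m' v) ^ 2), PS_herm]
            _ = 0 := by rw [Finset.sum_const, smul_zero]
        · apply Finset.sum_congr rfl; intro t _
          rw [cw_eval_inr, cw_eval_inr]
  rw [zero_add]

lemma cwLin_apply (m : V3) : cwLin b E m = cwfun b E m := rfl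

end Construction

/-- if there is a quaternary Hermitian LCD `[n,3,d]` code, then there is a
quaternary Hermitian LCD `[21s+n, 3, 16s+d]` code for every positive integer `s`. -/
theorem stmt13 (n d : ℕ)
    (h : ∃ C : Submodule F4 (Fin n → F4), IsHermLCDCode n 3 d C)
    (s : ℕ) (hs : 1 ≤ s) :
    ∃ D : Submodule F4 (Fin (21 * s + n) → F4),
      IsHermLCDCode (21 * s + n) 3 (16 * s + d) D := by
  classical
  obtain ⟨C, hCrank, hCLCD, hCmin⟩ := h
  have hE : Fintype.card ((Fin s × {v : V3 // v ∈ PS}) ⊕ Fin n) = 21 * s + n := by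
    rw [Fintype.card_sum, Fintype.card_prod, Fintype.card_fin, Fintype.card_fin,
      Fintype.card_coe, card_PS]
    ring
  set E := Fintype.equivFinOfCardEq hE with hEdef
  set B := Module.finBasisOfFinrankEq F4 C hCrank with hBdef
  set b : Fin 3 → (Fin n → F4) := fun i => (B i : Fin n → F4) with hbdef
  have hcoe : ∀ m : V3, ((∑ i, m i • B i : C) : Fin n → F4) = cCfun b m := by
    intro m
    have h1 : ((∑ i, m i • B i : C) : Fin n → F4) = ∑ i, (m i • (B i : Fin n → F4)) := by
      simp
    funext t
    rw [h1]
    simp [cCfun, hbdef]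
  have hmemC : ∀ m : V3, cCfun b m ∈ C := by
    intro m
    rw [← hcoe m]
    exact (∑ i, m i • B i : C).2
  have hzero : ∀ m : V3, cCfun b m = 0 → m = 0 := by
    intro m h0
    have hsum : (∑ i, m i • B i : C) = 0 := by
      apply Subtype.ext
      rw [hcoe m, h0]
      rfl
    have hli := Fintype.linearIndependent_iff.mp B.linearIndependent m hsum
    funext i
    exact hli i
  have hsurj : ∀ x ∈ C, ∃ m : V3, cCfun b m = x := by
    intro x hx
    refine ⟨fun i => B.repr ⟨x, hx⟩ i, ?_⟩
    rw [← hcoe]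
    rw [B.sum_repr ⟨x, hx⟩]
  have hinj : Function.Injective (cwLin b E) := by
    rw [injective_iff_map_eq_zero]
    intro m hm0
    apply hzero m
    funext t
    have := congrFun hm0 (E (Sum.inr t))
    rwa [cwLin_apply, cw_eval_inr] at this
  refine ⟨LinearMap.range (cwLin b E), ?_, ?_, ?_, ?_⟩
  · rw [LinearMap.finrank_range_of_inj hinj]
    exact Module.finrank_fin_fun F4
  · intro x hx hdual
    obtain ⟨m, rfl⟩ := LinearMap.mem_range.mp hx
    have h1 : ∀ m' : V3, hermInner (cCfun b m) (cCfun b m') = 0 := by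
      intro m'
      have h2 := hdual (cwLin b E m') (LinearMap.mem_range.mpr ⟨m', rfl⟩)
      rwa [cwLin_apply, cwLin_apply, herm_cw] at h2
    have hdualC : inHermDual C (cCfun b m) := by
      intro y hy
      obtain ⟨m', rfl⟩ := hsurj y hy
      exact h1 m'
    have hc0 := hCLCD (cCfun b m) (hmemC m) hdualC
    rw [hzero m hc0, map_zero]
  · obtain ⟨x₀, hx₀C, hx₀ne, hx₀wt⟩ := hCmin.1
    obtain ⟨m₀, hm₀⟩ := hsurj x₀ hx₀C
    have hm₀ne : m₀ ≠ 0 := by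
      intro h0
      apply hx₀ne
      rw [← hm₀, h0]
      funext t
      simp [cCfun]
    refine ⟨cwLin b E m₀, LinearMap.mem_range.mpr ⟨m₀, rfl⟩, ?_, ?_⟩
    · intro h0
      exact hm₀ne (hinj (h0.trans (map_zero _).symm))
    · rw [cwLin_apply, wt_cw, count16 hm₀ne, hm₀, hx₀wt]
      ring
  · intro x hx hxne
    obtain ⟨m, rfl⟩ := LinearMap.mem_range.mp hx
    have hmne : m ≠ 0 := by
      rintro rfl
      exact hxne (map_zero _)
    have hcne : cCfun b m ≠ 0 := fun h0 => hmne (hzero m h0)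
    have hge := hCmin.2 (cCfun b m) (hmemC m) hcne
    rw [cwLin_apply, wt_cw, count16 hmne]
    omega
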